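/- arXiv:1010.3013 — 7 statements merged into one kernel-verified Lean document; each statement's English description precedes it below -/
import Mathlib

section
/- Let n ≥ 1, let t0 ≤ tf be reals, let f : ℝ × ℝⁿ → ℝⁿ be continuous, and let V : ℝ × ℝⁿ → ℝ be continuously differentiable with V(t,x) ≥ 0 for all (t,x) ∈ [t0,tf] × ℝⁿ. Assume that for every t ∈ [t0,tf] and every x ∈ ℝⁿ with V(t,x) = 1 one has ∂V/∂t(t,x) + ⟨∇ₓV(t,x), f(t,x)⟩ < 0. Then for every τ ∈ [t0,tf] and every differentiable curve x : [τ,tf] → ℝⁿ satisfying x′(t) = f(t,x(t)) for all t ∈ [τ,tf] and V(τ,x(τ)) ≤ 1, one has V(t,x(t)) ≤ 1 for all t ∈ [τ,tf]. -/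
open Set

/-! Along a solution, `g t = V (t, x t)` has right derivative `∂ₜV + ⟨∇ₓV, f⟩`, which is negative
whenever `g t = 1`. So `g` can never cross the level `1` from below: this is the fencing (barrier)
theorem `image_le_of_deriv_right_lt_deriv_boundary`, applied with the constant barrier `1`. -/

section PartialDerivatives

variable {E F : Type*} [NormedAddCommGroup E] [NormedSpace ℝ E]
  [NormedAddCommGroup F] [NormedSpace ℝ F] {V : ℝ × E → F}

theorem deriv_add_fderiv_eq_fderiv_apply {t : ℝ} {y : E} (hV : DifferentiableAt ℝ V (t, y))
    (v : E) :
    deriv (fun s => V (s, y)) t + fderiv ℝ (fun z => V (t, z)) y v = fderiv ℝ V (t, y) (1, v) := by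
  have htime : HasDerivAt (fun s => V (s, y)) (fderiv ℝ V (t, y) (1, 0)) t :=
    hV.hasFDerivAt.comp_hasDerivAt t ((hasDerivAt_id t).prodMk (hasDerivAt_const t y))
  have hspace : HasFDerivAt (fun z => V (t, z))
      ((fderiv ℝ V (t, y)).comp (ContinuousLinearMap.inr ℝ ℝ E)) y :=
    hV.hasFDerivAt.comp y (hasFDerivAt_prodMk_right t y)
  rw [htime.deriv, hspace.fderiv, ContinuousLinearMap.comp_apply, ContinuousLinearMap.inr_apply,
    ← map_add, Prod.mk_add_mk, add_zero, zero_add]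

theorem HasDerivWithinAt.fderiv_comp_graph {x : ℝ → E} {x' : E} {s : Set ℝ} {t : ℝ}
    (hV : DifferentiableAt ℝ V (t, x t)) (hx : HasDerivWithinAt x x' s t) :
    HasDerivWithinAt (fun t => V (t, x t)) (fderiv ℝ V (t, x t) (1, x')) s t :=
  hV.hasFDerivAt.comp_hasDerivWithinAt t ((hasDerivWithinAt_id t s).prodMk hx)

end PartialDerivatives

theorem funnel_invariance_general
    (n : ℕ) (t0 tf : ℝ)
    (f : ℝ × EuclideanSpace ℝ (Fin n) → EuclideanSpace ℝ (Fin n))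
    (V : ℝ × EuclideanSpace ℝ (Fin n) → ℝ)
    (hV : ContDiff ℝ 1 V)
    (hdec : ∀ t ∈ Icc t0 tf, ∀ x : EuclideanSpace ℝ (Fin n), V (t, x) = 1 →
      deriv (fun s => V (s, x)) t
        + fderiv ℝ (fun y => V (t, y)) x (f (t, x)) < 0)
    (τ : ℝ) (hτ : τ ∈ Icc t0 tf)
    (x : ℝ → EuclideanSpace ℝ (Fin n))
    (hx : ∀ t ∈ Icc τ tf, HasDerivWithinAt x (f (t, x t)) (Icc τ tf) t)
    (hinit : V (τ, x τ) ≤ 1) :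
    ∀ t ∈ Icc τ tf, V (t, x t) ≤ 1 := by
  have hVd : Differentiable ℝ V := hV.differentiable one_ne_zero
  have hg : ∀ t ∈ Icc τ tf, HasDerivWithinAt (fun t => V (t, x t))
      (fderiv ℝ V (t, x t) (1, f (t, x t))) (Icc τ tf) t := fun t ht =>
    (hx t ht).fderiv_comp_graph (hVd _)
  refine image_le_of_deriv_right_lt_deriv_boundary (B := fun _ => 1) (B' := fun _ => 0)
    (fun t ht => (hg t ht).continuousWithinAt)
    (fun t ht => (hg t (Ico_subset_Icc_self ht)).mono_of_mem_nhdsWithin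
      (Icc_mem_nhdsGE_of_mem ht))
    hinit (fun _ => hasDerivAt_const _ _) ?_
  intro t ht hlevel
  rw [← deriv_add_fderiv_eq_fderiv_apply (hVd _)]
  exact hdec t ⟨hτ.1.trans ht.1, ht.2.le⟩ _ hlevel

/-- Lemma 1 of the paper (invariance part): if the time-varying Lyapunov function `V`
decreases strictly along the vector field on its unit level set for every time in
`[t0, tf]`, then the sublevel sets `Ω_t = {x | V (t, x) ≤ 1}` form a funnel: any
solution of `ẋ = f(t, x)` starting inside `Ω_τ` at a time `τ ∈ [t0, tf]` stays
inside `Ω_t` for all `t ∈ [τ, tf]`. -/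
theorem funnel_invariance
    (n : ℕ) (hn : 1 ≤ n) (t0 tf : ℝ) (ht : t0 ≤ tf)
    (f : ℝ × EuclideanSpace ℝ (Fin n) → EuclideanSpace ℝ (Fin n))
    (hf : Continuous f)
    (V : ℝ × EuclideanSpace ℝ (Fin n) → ℝ)
    (hV : ContDiff ℝ 1 V)
    (hVnonneg : ∀ t ∈ Icc t0 tf, ∀ x : EuclideanSpace ℝ (Fin n), 0 ≤ V (t, x))
    (hdec : ∀ t ∈ Icc t0 tf, ∀ x : EuclideanSpace ℝ (Fin n), V (t, x) = 1 →
      deriv (fun s => V (s, x)) t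
        + fderiv ℝ (fun y => V (t, y)) x (f (t, x)) < 0)
    (τ : ℝ) (hτ : τ ∈ Icc t0 tf)
    (x : ℝ → EuclideanSpace ℝ (Fin n))
    (hx : ∀ t ∈ Icc τ tf, HasDerivWithinAt x (f (t, x t)) (Icc τ tf) t)
    (hinit : V (τ, x τ) ≤ 1) :
    ∀ t ∈ Icc τ tf, V (t, x t) ≤ 1 :=
  funnel_invariance_general n t0 tf f V hV hdec τ hτ x hx hinit
end

section
/- Let n ≥ 1, let t0 ≤ tf be reals, let f : ℝ × ℝⁿ → ℝⁿ be continuous, let V : ℝ × ℝⁿ → ℝ be continuously differentiable with V(t,x) ≥ 0 for all (t,x) ∈ [t0,tf] × ℝⁿ, and let G ⊆ ℝⁿ. Assume that for every t ∈ [t0,tf] and every x ∈ ℝⁿ with V(t,x) = 1 one has ∂V/∂t(t,x) + ⟨∇ₓV(t,x), f(t,x)⟩ < 0, and assume that {x ∈ ℝⁿ : V(tf,x) ≤ 1} ⊆ G. Then for every τ ∈ [t0,tf] and every differentiable curve x : [τ,tf] → ℝⁿ satisfying x′(t) = f(t,x(t)) for all t ∈ [τ,tf] and V(τ,x(τ))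 ≤ 1, one has x(tf) ∈ G. -/
/-! Along a solution, `t ↦ V (t, x t)` can never cross the level `1` upwards: at any time
where it sits on that level its derivative, computed by the chain rule, is negative. So the
solution stays in `Ω_t` up to `tf`, and `Ω_tf ⊆ G`. -/

open Set

section Calculus

variable {E F : Type*} [NormedAddCommGroup E] [NormedSpace ℝ E]
  [NormedAddCommGroup F] [NormedSpace ℝ F]

theorem HasFDerivAt.hasDerivWithinAt_comp_prodMk {V : ℝ × E → F} {V' : ℝ × E →L[ℝ] F}
    {x : ℝ → E} {v : E} {s : Set ℝ} {t : ℝ} (hV : HasFDerivAt V V' (t, x t))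
    (hx : HasDerivWithinAt x v s t) :
    HasDerivWithinAt (fun u => V (u, x u))
      (deriv (fun u => V (u, x t)) t + fderiv ℝ (fun y => V (t, y)) (x t) v) s t := by
  have htime : HasDerivAt (fun u => V (u, x t)) (V' (1, 0)) t :=
    hV.comp_hasDerivAt t ((hasDerivAt_id t).prodMk (hasDerivAt_const t (x t)))
  have hspace : HasFDerivAt (fun y => V (t, y)) (V'.comp (.inr ℝ ℝ E)) (x t) :=
    hV.comp (x t) (hasFDerivAt_prodMk_right t (x t))
  have hsplit : ((1 : ℝ), v) = (1, 0) + (0, v) := by simp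
  rw [htime.deriv, hspace.fderiv, ContinuousLinearMap.comp_apply, ContinuousLinearMap.inr_apply,
    ← map_add, ← hsplit]
  exact hV.comp_hasDerivWithinAt t ((hasDerivWithinAt_id t s).prodMk hx)

end Calculus

theorem image_le_of_hasDerivWithinAt_neg_of_eq {g g' : ℝ → ℝ} {a b c : ℝ}
    (hg : ∀ t ∈ Icc a b, HasDerivWithinAt g (g' t) (Icc a b) t) (ha : g a ≤ c)
    (hlevel : ∀ t ∈ Ico a b, g t = c → g' t < 0) : ∀ t ∈ Icc a b, g t ≤ c :=
  image_le_of_deriv_right_lt_deriv_boundary' (fun t ht => (hg t ht).continuousWithinAt)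
    (fun t ht => (hg t (Ico_subset_Icc_self ht)).mono_of_mem_nhdsWithin
      (Icc_mem_nhdsGE_of_mem ht))
    ha continuousOn_const (fun _ _ => hasDerivWithinAt_const _ _ _) hlevel

theorem funnel_into_goal_general
    (n : ℕ) (t0 tf : ℝ)
    (f : ℝ × EuclideanSpace ℝ (Fin n) → EuclideanSpace ℝ (Fin n))
    (V : ℝ × EuclideanSpace ℝ (Fin n) → ℝ)
    (hV : ContDiff ℝ 1 V)
    (G : Set (EuclideanSpace ℝ (Fin n)))
    (hdec : ∀ t ∈ Icc t0 tf, ∀ x : EuclideanSpace ℝ (Fin n), V (t, x) = 1 →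
      deriv (fun s => V (s, x)) t
        + fderiv ℝ (fun y => V (t, y)) x (f (t, x)) < 0)
    (hgoal : {x : EuclideanSpace ℝ (Fin n) | V (tf, x) ≤ 1} ⊆ G)
    (τ : ℝ) (hτ : τ ∈ Icc t0 tf)
    (x : ℝ → EuclideanSpace ℝ (Fin n))
    (hx : ∀ t ∈ Icc τ tf, HasDerivWithinAt x (f (t, x t)) (Icc τ tf) t)
    (hinit : V (τ, x τ) ≤ 1) :
    x tf ∈ G := by
  have hVx : ∀ t ∈ Icc τ tf, HasDerivWithinAt (fun u => V (u, x u))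
      (deriv (fun u => V (u, x t)) t + fderiv ℝ (fun y => V (t, y)) (x t) (f (t, x t)))
      (Icc τ tf) t := fun t ht =>
    ((hV.differentiable one_ne_zero) _).hasFDerivAt.hasDerivWithinAt_comp_prodMk (hx t ht)
  exact hgoal <| image_le_of_hasDerivWithinAt_neg_of_eq hVx hinit
    (fun t ht => hdec t ⟨hτ.1.trans ht.1, ht.2.le⟩ (x t)) tf (right_mem_Icc.2 hτ.2)

/-- Lemma 1 of the paper ("funnel into G" part): if the time-varying Lyapunov function `V`
decreases strictly along the vector field on its unit level set for every time in
`[t0, tf]`, and the final-time sublevel set `Ω_{tf} = {x | V (tf, x) ≤ 1}` is contained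
in the goal region `G`, then any solution of `ẋ = f(t, x)` starting inside `Ω_τ` at a
time `τ ∈ [t0, tf]` satisfies `x(tf) ∈ G`. -/
theorem funnel_into_goal
    (n : ℕ) (hn : 1 ≤ n) (t0 tf : ℝ) (ht : t0 ≤ tf)
    (f : ℝ × EuclideanSpace ℝ (Fin n) → EuclideanSpace ℝ (Fin n))
    (hf : Continuous f)
    (V : ℝ × EuclideanSpace ℝ (Fin n) → ℝ)
    (hV : ContDiff ℝ 1 V)
    (hVnonneg : ∀ t ∈ Icc t0 tf, ∀ x : EuclideanSpace ℝ (Fin n), 0 ≤ V (t, x))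
    (G : Set (EuclideanSpace ℝ (Fin n)))
    (hdec : ∀ t ∈ Icc t0 tf, ∀ x : EuclideanSpace ℝ (Fin n), V (t, x) = 1 →
      deriv (fun s => V (s, x)) t
        + fderiv ℝ (fun y => V (t, y)) x (f (t, x)) < 0)
    (hgoal : {x : EuclideanSpace ℝ (Fin n) | V (tf, x) ≤ 1} ⊆ G)
    (τ : ℝ) (hτ : τ ∈ Icc t0 tf)
    (x : ℝ → EuclideanSpace ℝ (Fin n))
    (hx : ∀ t ∈ Icc τ tf, HasDerivWithinAt x (f (t, x t)) (Icc τ tf) t)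
    (hinit : V (τ, x τ) ≤ 1) :
    x tf ∈ G :=
  funnel_into_goal_general n t0 tf f V hV G hdec hgoal τ hτ x hx hinit
end

section
/- Let τ ≤ tf be reals and let W : [τ,tf] → ℝ be continuous with W(τ) ≤ 1. Suppose that for every t ∈ [τ,tf) with W(t) = 1 the upper right Dini derivative satisfies limsup_{h→0⁺} (W(t+h) − W(t))/h < 0. Then W(t) ≤ 1 for all t ∈ [τ,tf]. -/
open Set Filter Topology

/-- The scalar comparison principle underlying Lemma 1 of the paper: if `W` is continuous
on `[τ, tf]`, starts no larger than `1`, and has strictly negative upper right Dini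
derivative whenever it hits the value `1`, then `W` stays `≤ 1` on all of `[τ, tf]`. -/
theorem dini_invariance
    (τ tf : ℝ) (h : τ ≤ tf) (W : ℝ → ℝ)
    (hW : ContinuousOn W (Icc τ tf)) (hinit : W τ ≤ 1)
    (hdini : ∀ t ∈ Ico τ tf, W t = 1 →
      limsup (fun d : ℝ => (W (t + d) - W t) / d) (nhdsWithin 0 (Ioi 0)) < 0) :
    ∀ t ∈ Icc τ tf, W t ≤ 1 := by
  by_contra hcon
  push_neg at hcon
  obtain ⟨t0, ht0mem, ht0⟩ := hcon
  set S : Set ℝ := {t | t ∈ Icc τ tf ∧ 1 < W t} with hSdef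
  have hSne : S.Nonempty := ⟨t0, ht0mem, ht0⟩
  have hbdd : BddBelow S := ⟨τ, fun t ht => ht.1.1⟩
  set s := sInf S with hs
  have hSsub : S ⊆ Icc τ tf := fun t ht => ht.1
  have hsτ : τ ≤ s := le_csInf hSne fun t ht => ht.1.1
  have hst0 : s ≤ t0 := csInf_le hbdd ⟨ht0mem, ht0⟩
  have hstf : s ≤ tf := hst0.trans ht0mem.2
  have hsIcc : s ∈ Icc τ tf := ⟨hsτ, hstf⟩
  have hcw : ContinuousWithinAt W (Icc τ tf) s := hW s hsIcc
  -- W s ≥ 1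
  have hcl : s ∈ closure S := csInf_mem_closure hSne hbdd
  have hnb : (𝓝[S] s).NeBot := mem_closure_iff_nhdsWithin_neBot.mp hcl
  have htendS : Tendsto W (𝓝[S] s) (𝓝 (W s)) :=
    hcw.tendsto.mono_left (nhdsWithin_mono s hSsub)
  have hge : 1 ≤ W s :=
    ge_of_tendsto htendS (eventually_nhdsWithin_of_forall fun t ht => le_of_lt ht.2)
  -- W s ≤ 1
  have hle : W s ≤ 1 := by
    rcases eq_or_lt_of_le hsτ with heq | hlt
    · rw [← heq]; exact hinit
    · have hsub : Ico τ s ⊆ Icc τ tf := fun t ht => ⟨ht.1, le_of_lt (lt_of_lt_of_le ht.2 hstf)⟩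
      have hnb2 : (𝓝[Ico τ s] s).NeBot := by
        refine mem_closure_iff_nhdsWithin_neBot.mp ?_
        rw [closure_Ico (ne_of_lt hlt)]
        exact ⟨hsτ, le_refl s⟩
      have htend2 : Tendsto W (𝓝[Ico τ s] s) (𝓝 (W s)) :=
        hcw.tendsto.mono_left (nhdsWithin_mono s hsub)
      refine le_of_tendsto htend2 (eventually_nhdsWithin_of_forall fun t ht => ?_)
      by_contra hgt
      push_neg at hgt
      exact absurd ht.2 (not_lt.mpr (csInf_le hbdd ⟨hsub ht, hgt⟩))
  have hWs : W s = 1 := le_antisymm hle hge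
  have hsnotS : s ∉ S := fun hmem => absurd hWs (ne_of_gt hmem.2)
  have hslt : s < tf := by
    rcases lt_or_eq_of_le hstf with h' | h'
    · exact h'
    · exfalso
      have : t0 = s := le_antisymm (h' ▸ ht0mem.2) hst0
      rw [this, hWs] at ht0
      exact lt_irrefl 1 ht0
  have hd := hdini s ⟨hsτ, hslt⟩ hWs
  -- extract eventual bound from limsup
  set T : Set ℝ := {a | ∀ᶠ d in 𝓝[>] (0:ℝ), (W (s + d) - W s) / d ≤ a} with hTdef
  have hTne : T.Nonempty := by
    by_contra hne
    rw [Set.not_nonempty_iff_eq_empty] at hne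
    rw [limsup_eq] at hd
    have : sInf T < 0 := hd
    rw [hne, Real.sInf_empty] at this
    exact lt_irrefl 0 this
  obtain ⟨a, haT, halt⟩ := exists_lt_of_csInf_lt hTne (by rw [← limsup_eq] at *; exact hd)
  obtain ⟨u, hu, husub⟩ := mem_nhdsGT_iff_exists_Ioo_subset.mp haT
  have hsu : s < s + u := by linarith [mem_Ioi.mp hu]
  obtain ⟨t, htS, htlt⟩ := exists_lt_of_csInf_lt hSne hsu
  have hst : s ≤ t := csInf_le hbdd htS
  have hne' : s ≠ t := fun heq => hsnotS (heq ▸ htS)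
  have hpos : 0 < t - s := by
    rcases lt_or_eq_of_le hst with h' | h'
    · linarith
    · exact absurd h' hne'
  have hdIoo : t - s ∈ Ioo (0:ℝ) u := ⟨hpos, by linarith⟩
  have hq : (W (s + (t - s)) - W s) / (t - s) ≤ a := husub hdIoo
  rw [show s + (t - s) = t by ring, hWs] at hq
  have : W t - 1 ≤ a * (t - s) := (div_le_iff₀ hpos).mp hq
  have hneg : a * (t - s) < 0 := mul_neg_of_neg_of_pos halt hpos
  have : W t < 1 := by linarith
  exact absurd htS.2 (not_lt.mpr (le_of_lt this))
end

section
/- Let n ≥ 1 and τ < tf be reals. Let f : ℝ × ℝⁿ → ℝⁿ be twice continuously differentiable. Let x0 : [τ,tf] → ℝⁿ be continuously differentiable with x0′(t) = f(t,x0(t)) for all t ∈ [τ,tf], and set A(t) = D_x f(t,x0(t)) (the derivative of f in its second argument evaluated along the trajectory). Let Q : [τ,tf] → ℝ^{n×n} be continuous with Q(t) symmetric positive definite for every t, and let P0 : [τ,tf] → ℝ^{n×n} be continuously differentiable with P0(t) symmetric positive definite for every t, satisfying the Lyapunov differential equation P0′(t) = −(A(t)ᵀ P0(t) + P0(t) A(t)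 + Q(t)) on [τ,tf]. Then there exists c > 0 such that, defining V(t,x) = exp(c(tf−t)/(tf−τ)) · (x − x0(t))ᵀ P0(t) (x − x0(t)), for every t ∈ [τ,tf] and every x ∈ ℝⁿ with V(t,x) = 1 one has ∂V/∂t(t,x) + ⟨∇ₓV(t,x), f(t,x)⟩ < 0. -/
open Set Matrix

/-- The quadratic form `x ↦ xᵀ M x` associated to a square matrix `M`. -/
noncomputable def quadForm {n : ℕ} (M : Matrix (Fin n) (Fin n) ℝ)
    (x : EuclideanSpace ℝ (Fin n)) : ℝ :=
  ∑ i, ∑ j, x i * M i j * x j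

/-!
Write `z = x - x0 t` and `W = zᵀ P0(t) z`, so that `V = e W` with `e = exp (c (tf - t)/(tf - τ))`.
Since `x0` solves the ODE and `P0` the Lyapunov equation, `∂W/∂t + ⟨∇ₓW, f⟩` equals
`(f(t,x) - f(t,x0 t))ᵀ P0 z + zᵀ P0 (f(t,x) - f(t,x0 t)) + zᵀ P0' z`. By compactness of `[τ, tf]`
the entries of `P0` and `P0'` are bounded and `f` is Lipschitz in `x` near the trajectory, so this is
at most `C ‖z‖²`, and uniform positive definiteness `λ ‖z‖² ≤ W` turns it into at most `C W / λ`.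
On `{V = 1}` the exponential factor contributes `-c/(tf - τ) · e W = -c/(tf - τ)` and the rest is at
most `C e W / λ = C / λ`, so `c = (tf - τ) (C / λ + 1)` makes the total at most `-1`.
-/

section QuadForm

variable {n : ℕ}

noncomputable def bilinForm (M : Matrix (Fin n) (Fin n) ℝ) (x y : EuclideanSpace ℝ (Fin n)) : ℝ :=
  M.toBilin' (WithLp.ofLp x) (WithLp.ofLp y)

lemma quadForm_eq_bilinForm (M : Matrix (Fin n) (Fin n) ℝ) (x : EuclideanSpace ℝ (Fin n)) :
    quadForm M x = bilinForm M x x := by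
  rw [bilinForm, toBilin'_apply]; rfl

lemma quadForm_smul (M : Matrix (Fin n) (Fin n) ℝ) (r : ℝ) (x : EuclideanSpace ℝ (Fin n)) :
    quadForm M (r • x) = r ^ 2 * quadForm M x := by
  simp only [quadForm_eq_bilinForm, bilinForm, WithLp.ofLp_smul, map_smul, LinearMap.smul_apply,
    smul_eq_mul]
  ring

lemma Matrix.PosDef.quadForm_pos {M : Matrix (Fin n) (Fin n) ℝ} (hM : M.PosDef)
    {x : EuclideanSpace ℝ (Fin n)} (hx : x ≠ 0) : 0 < quadForm M x := by
  rw [quadForm_eq_bilinForm, bilinForm, toBilin'_apply', ← star_trivial (WithLp.ofLp x)]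
  exact hM.dotProduct_mulVec_pos (by simpa using hx)

lemma abs_bilinForm_le (M : Matrix (Fin n) (Fin n) ℝ) (x y : EuclideanSpace ℝ (Fin n)) :
    |bilinForm M x y| ≤ (∑ i, ∑ j, |M i j|) * ‖x‖ * ‖y‖ := by
  have hcoord (w : EuclideanSpace ℝ (Fin n)) (k : Fin n) : |w k| ≤ ‖w‖ := by
    simpa using PiLp.norm_apply_le w k
  rw [bilinForm, toBilin'_apply, Finset.sum_mul, Finset.sum_mul]
  refine (Finset.abs_sum_le_sum_abs _ _).trans (Finset.sum_le_sum fun i _ => ?_)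
  rw [Finset.sum_mul, Finset.sum_mul]
  refine (Finset.abs_sum_le_sum_abs _ _).trans (Finset.sum_le_sum fun j _ => ?_)
  rw [abs_mul, abs_mul, mul_comm |_|, mul_assoc, mul_assoc]
  gcongr <;> apply hcoord

lemma bilinForm_add_quadForm_add_bilinForm_le {P D : Matrix (Fin n) (Fin n) ℝ} {BP BD L : ℝ}
    (hP : ∑ i, ∑ j, |P i j| ≤ BP) (hD : ∑ i, ∑ j, |D i j| ≤ BD)
    {z w : EuclideanSpace ℝ (Fin n)} (hw : ‖w‖ ≤ L * ‖z‖) :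
    bilinForm P w z + quadForm D z + bilinForm P z w ≤ (BD + 2 * BP * L) * ‖z‖ ^ 2 := by
  have hBP : 0 ≤ BP := (by positivity : (0 : ℝ) ≤ ∑ i, ∑ j, |P i j|).trans hP
  have hleft : bilinForm P w z ≤ BP * (L * ‖z‖) * ‖z‖ :=
    (le_abs_self _).trans ((abs_bilinForm_le P _ _).trans (by gcongr))
  have hright : bilinForm P z w ≤ BP * ‖z‖ * (L * ‖z‖) :=
    (le_abs_self _).trans ((abs_bilinForm_le P _ _).trans (by gcongr))
  have hmid : quadForm D z ≤ BD * ‖z‖ * ‖z‖ := by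
    rw [quadForm_eq_bilinForm]
    exact (le_abs_self _).trans ((abs_bilinForm_le D _ _).trans (by gcongr))
  linear_combination hleft + hmid + hright

lemma exists_pos_mul_sq_norm_le_quadForm {X : Type*} [TopologicalSpace X] {K : Set X}
    (hK : IsCompact K) {P : X → Matrix (Fin n) (Fin n) ℝ}
    (hPc : ∀ i j, ContinuousOn (fun t => P t i j) K) (hPpos : ∀ t ∈ K, (P t).PosDef) :
    ∃ lam > 0, ∀ t ∈ K, ∀ z, lam * ‖z‖ ^ 2 ≤ quadForm (P t) z := by
  have hcont : ContinuousOn (fun p : X × EuclideanSpace ℝ (Fin n) => quadForm (P p.1) p.2)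
      (K ×ˢ Metric.sphere 0 1) := by
    have hcoord (k : Fin n) : Continuous fun p : X × EuclideanSpace ℝ (Fin n) => p.2 k := by
      fun_prop
    refine continuousOn_finsetSum _ fun i _ => continuousOn_finsetSum _ fun j _ => ?_
    exact ((hcoord i).continuousOn.mul ((hPc i j).comp continuousOn_fst fun p hp => hp.1)).mul
      (hcoord j).continuousOn
  obtain ⟨lam, hlam, hmin⟩ := (hK.prod (isCompact_sphere 0 1)).exists_forall_le' hcont
    fun p hp => (hPpos p.1 hp.1).quadForm_pos (ne_zero_of_mem_unit_sphere ⟨p.2, hp.2⟩)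
  refine ⟨lam, hlam, fun t ht z => ?_⟩
  rcases eq_or_ne z 0 with rfl | hz
  · simp [quadForm]
  have hunit : ‖z‖⁻¹ • z ∈ Metric.sphere (0 : EuclideanSpace ℝ (Fin n)) 1 := by
    simp [norm_smul, hz]
  have := hmin (t, _) ⟨ht, hunit⟩
  rwa [quadForm_smul, inv_pow, ← div_eq_inv_mul, le_div_iff₀ (by positivity)] at this

lemma exists_sum_abs_entries_le {X : Type*} [TopologicalSpace X] {K : Set X} (hK : IsCompact K)
    {M : X → Matrix (Fin n) (Fin n) ℝ} (hM : ∀ i j, ContinuousOn (fun t => M t i j) K) :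
    ∃ B ≥ 0, ∀ t ∈ K, ∑ i, ∑ j, |M t i j| ≤ B := by
  obtain ⟨B, hB⟩ := hK.bddAbove_image (f := fun t => ∑ i, ∑ j, |M t i j|) (by fun_prop)
  exact ⟨max B 0, le_max_right _ _, fun t ht => (hB (mem_image_of_mem _ ht)).trans (le_max_left _ _)⟩

lemma continuousOn_lyapunov_apply {X : Type*} [TopologicalSpace X] {K : Set X}
    {A P Q : X → Matrix (Fin n) (Fin n) ℝ} (hA : ∀ i j, ContinuousOn (fun t => A t i j) K)
    (hP : ∀ i j, ContinuousOn (fun t => P t i j) K) (hQ : ∀ i j, ContinuousOn (fun t => Q t i j) K)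
    (i j : Fin n) : ContinuousOn (fun t => (-((A t)ᵀ * P t + P t * A t + Q t)) i j) K := by
  simp only [Matrix.neg_apply, Matrix.add_apply, Matrix.mul_apply, Matrix.transpose_apply]
  exact ((continuousOn_finsetSum _ fun k _ => (hA k i).mul (hP k j)).add
    (continuousOn_finsetSum _ fun k _ => (hP i k).mul (hA k j))).add (hQ i j) |>.neg

end QuadForm

section Calculus

variable {n : ℕ}

@[fun_prop]
lemma differentiable_quadForm (M : Matrix (Fin n) (Fin n) ℝ) : Differentiable ℝ (quadForm M) := by
  unfold quadForm; fun_prop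

lemma hasDerivWithinAt_quadForm {P : ℝ → Matrix (Fin n) (Fin n) ℝ} {P' : Matrix (Fin n) (Fin n) ℝ}
    {z : ℝ → EuclideanSpace ℝ (Fin n)} {z' : EuclideanSpace ℝ (Fin n)} {s : Set ℝ} {t : ℝ}
    (hP : ∀ i j, HasDerivWithinAt (fun r => P r i j) (P' i j) s t)
    (hz : HasDerivWithinAt z z' s t) :
    HasDerivWithinAt (fun r => quadForm (P r) (z r))
      (bilinForm (P t) z' (z t) + quadForm P' (z t) + bilinForm (P t) (z t) z') s t := by
  have hzi : ∀ i, HasDerivWithinAt (fun r => z r i) (z' i) s t := fun i =>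
    (EuclideanSpace.proj (𝕜 := ℝ) i).hasFDerivAt.comp_hasDerivWithinAt t hz
  have h := HasDerivWithinAt.fun_sum (u := Finset.univ) fun i _ =>
    HasDerivWithinAt.fun_sum (u := Finset.univ) fun j _ =>
      ((hzi i).fun_mul (hP i j)).fun_mul (hzi j)
  refine h.congr_deriv ?_
  simp only [bilinForm, toBilin'_apply, quadForm, ← Finset.sum_add_distrib]
  refine Finset.sum_congr rfl fun i _ => Finset.sum_congr rfl fun j _ => ?_
  ring

lemma fderiv_quadForm_apply (M : Matrix (Fin n) (Fin n) ℝ) (x v : EuclideanSpace ℝ (Fin n)) :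
    fderiv ℝ (quadForm M) x v = bilinForm M v x + bilinForm M x v := by
  have hline : HasLineDerivAt ℝ (quadForm M) (bilinForm M v x + bilinForm M x v) x v := by
    have h := hasDerivWithinAt_quadForm (P := fun _ => M) (P' := 0) (s := univ) (t := 0)
      (fun i j => hasDerivWithinAt_const (0 : ℝ) univ (M i j))
      (((hasDerivAt_id (0 : ℝ)).smul_const v).const_add x).hasDerivWithinAt
    simpa [HasLineDerivAt, quadForm] using h
  rw [← (differentiable_quadForm M x).lineDeriv_eq_fderiv, hline.lineDeriv]

lemma derivWithin_add_fderiv_weighted_quadForm {w : ℝ → ℝ} {w' : ℝ}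
    {P : ℝ → Matrix (Fin n) (Fin n) ℝ} {P' : Matrix (Fin n) (Fin n) ℝ}
    {x0 : ℝ → EuclideanSpace ℝ (Fin n)} {u : EuclideanSpace ℝ (Fin n)} {s : Set ℝ} {t : ℝ}
    (hw : HasDerivWithinAt w w' s t) (hP : ∀ i j, HasDerivWithinAt (fun r => P r i j) (P' i j) s t)
    (hx0 : HasDerivWithinAt x0 u s t) (hs : UniqueDiffWithinAt ℝ s t)
    (x v : EuclideanSpace ℝ (Fin n)) :
    derivWithin (fun r => w r * quadForm (P r) (x - x0 r)) s t
        + fderiv ℝ (fun y => w t * quadForm (P t) (y - x0 t)) x v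
      = w' * quadForm (P t) (x - x0 t) + w t * (bilinForm (P t) (v - u) (x - x0 t)
          + quadForm P' (x - x0 t) + bilinForm (P t) (x - x0 t) (v - u)) := by
  rw [(hw.fun_mul (hasDerivWithinAt_quadForm hP (hx0.const_sub x))).derivWithin hs,
    fderiv_const_mul (by fun_prop), FunLike.coe_smul, Pi.smul_apply, smul_eq_mul, fderiv_comp_sub,
    fderiv_quadForm_apply]
  simp only [bilinForm, WithLp.ofLp_sub, WithLp.ofLp_neg, map_sub, map_neg, LinearMap.sub_apply,
    LinearMap.neg_apply]
  ring

variable {E F G : Type*} [NormedAddCommGroup E] [NormedSpace ℝ E] [NormedAddCommGroup F]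
  [NormedSpace ℝ F] [NormedAddCommGroup G] [NormedSpace ℝ G]

lemma ContDiff.continuousOn_fderiv_right_apply {f : E × F → G} (hf : ContDiff ℝ 1 f) {S : Set E}
    {γ : E → F} (hγ : ContinuousOn γ S) (v : F) :
    ContinuousOn (fun t => fderiv ℝ (fun y => f (t, y)) (γ t) v) S := by
  have hpartial (t : E) : fderiv ℝ (fun y => f (t, y)) (γ t) =
      (fderiv ℝ f (t, γ t)).comp (ContinuousLinearMap.inr ℝ E F) :=
    ((hf.differentiable one_ne_zero _).hasFDerivAt.comp _ (hasFDerivAt_prodMk_right t (γ t))).fderiv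
  simp only [hpartial]
  exact ((hf.continuous_fderiv one_ne_zero).comp_continuousOn (continuousOn_id.prodMk hγ)).clm_apply
    continuousOn_const

lemma ContDiff.exists_lipschitz_near_curve [ProperSpace F] {f : E × F → G} (hf : ContDiff ℝ 1 f)
    {S : Set E} (hS : IsCompact S) {γ : E → F} (hγ : ContinuousOn γ S) (r : ℝ) :
    ∃ L ≥ 0, ∀ t ∈ S, ∀ x, ‖x - γ t‖ ≤ r → ‖f (t, x) - f (t, γ t)‖ ≤ L * ‖x - γ t‖ := by
  obtain ⟨ρ, hρ⟩ := hS.exists_bound_of_continuousOn hγ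
  obtain ⟨L, hL⟩ := (hS.prod (isCompact_closedBall (0 : F) (ρ + r))).exists_bound_of_continuousOn
    (hf.continuous_fderiv one_ne_zero).continuousOn
  refine ⟨max L 0, le_max_right _ _, fun t ht x hx => ?_⟩
  have hsub : {t} ×ˢ Metric.closedBall (γ t) r ⊆ S ×ˢ Metric.closedBall 0 (ρ + r) := by
    rintro ⟨s, y⟩ ⟨rfl, hy⟩
    refine ⟨ht, ?_⟩
    rw [mem_closedBall_zero_iff]
    linarith [norm_le_norm_add_norm_sub' y (γ s), hρ s ht, mem_closedBall_iff_norm.1 hy]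
  have := ((convex_singleton t).prod (convex_closedBall (γ t) r)).norm_image_sub_le_of_norm_fderiv_le
    (x := (t, γ t)) (y := (t, x)) (fun p _ => hf.differentiable one_ne_zero p)
    (fun p hp => (hL p (hsub hp)).trans (le_max_left L 0))
    ⟨mem_singleton t, Metric.mem_closedBall_self ((norm_nonneg _).trans hx)⟩
    ⟨mem_singleton t, mem_closedBall_iff_norm.2 hx⟩
  simpa using this

end Calculus

lemma exp_rate_add_lt_zero {T lam C e W s R : ℝ} (hT : 0 < T) (hlam : 0 < lam) (hC : 0 ≤ C)
    (he : 0 ≤ e) (heW : e * W = 1) (hs : lam * s ≤ W) (hR : R ≤ C * s) :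
    e * (T * (C / lam + 1) * -1 / T) * W + e * R < 0 := by
  have hrate : e * (T * (C / lam + 1) * -1 / T) * W = -(C / lam + 1) := by
    rw [mul_right_comm, heW, one_mul]
    field_simp
  have hgain : e * R ≤ C / lam :=
    calc e * R ≤ e * (C * (W / lam)) := by
          gcongr
          exact hR.trans (by gcongr; rwa [le_div_iff₀ hlam, mul_comm])
      _ = C / lam := by rw [← mul_one (C / lam), ← heW]; ring
  linarith

theorem exp_rescaled_lyapunov_certificate_general
    (n : ℕ) (τ tf : ℝ) (hτtf : τ < tf)
    (f : ℝ × EuclideanSpace ℝ (Fin n) → EuclideanSpace ℝ (Fin n))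
    (hf : ContDiff ℝ 2 f)
    (x0 : ℝ → EuclideanSpace ℝ (Fin n))
    (hx0 : ∀ t ∈ Icc τ tf, HasDerivWithinAt x0 (f (t, x0 t)) (Icc τ tf) t)
    (A : ℝ → Matrix (Fin n) (Fin n) ℝ)
    (hA : ∀ t ∈ Icc τ tf, ∀ i j, A t i j =
      (fderiv ℝ (fun y => f (t, y)) (x0 t) (EuclideanSpace.single j 1)) i)
    (Q : ℝ → Matrix (Fin n) (Fin n) ℝ)
    (hQcont : ∀ i j, ContinuousOn (fun t => Q t i j) (Icc τ tf))
    (P0 : ℝ → Matrix (Fin n) (Fin n) ℝ)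
    (hP0pos : ∀ t ∈ Icc τ tf, (P0 t).PosDef)
    (hP0' : ∀ t ∈ Icc τ tf, ∀ i j,
      HasDerivWithinAt (fun s => P0 s i j)
        ((-((A t)ᵀ * P0 t + P0 t * A t + Q t)) i j) (Icc τ tf) t) :
    ∃ c > (0 : ℝ), ∀ t ∈ Icc τ tf, ∀ x : EuclideanSpace ℝ (Fin n),
      Real.exp (c * (tf - t) / (tf - τ)) * quadForm (P0 t) (x - x0 t) = 1 →
      derivWithin
          (fun s => Real.exp (c * (tf - s) / (tf - τ)) * quadForm (P0 s) (x - x0 s))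
          (Icc τ tf) t
        + fderiv ℝ
            (fun y => Real.exp (c * (tf - t) / (tf - τ)) * quadForm (P0 t) (y - x0 t))
            x (f (t, x)) < 0 := by
  have hx0c : ContinuousOn x0 (Icc τ tf) := fun t ht => (hx0 t ht).continuousWithinAt
  have hP0c (i j : Fin n) : ContinuousOn (fun t => P0 t i j) (Icc τ tf) :=
    fun t ht => (hP0' t ht i j).continuousWithinAt
  have hf1 : ContDiff ℝ 1 f := hf.of_le one_le_two
  have hAc (i j : Fin n) : ContinuousOn (fun t => A t i j) (Icc τ tf) :=
    ((EuclideanSpace.proj i).continuous.comp_continuousOn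
      (hf1.continuousOn_fderiv_right_apply hx0c (EuclideanSpace.single j 1))).congr
      fun t ht => hA t ht i j
  obtain ⟨lam, hlam, hcoer⟩ := exists_pos_mul_sq_norm_le_quadForm isCompact_Icc hP0c hP0pos
  obtain ⟨BP, hBP0, hBP⟩ := exists_sum_abs_entries_le isCompact_Icc hP0c
  obtain ⟨BD, hBD0, hBD⟩ :=
    exists_sum_abs_entries_le isCompact_Icc (continuousOn_lyapunov_apply hAc hP0c hQcont)
  obtain ⟨L, hL0, hL⟩ := hf1.exists_lipschitz_near_curve isCompact_Icc hx0c √(1 / lam)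
  set c := (tf - τ) * ((BD + 2 * BP * L) / lam + 1)
  have hc : 0 < c := by positivity
  refine ⟨c, hc, fun t ht x hV => ?_⟩
  have hexp := ((((hasDerivAt_id t).const_sub tf).const_mul c).div_const (tf - τ)).exp
  refine (derivWithin_add_fderiv_weighted_quadForm hexp.hasDerivWithinAt (hP0' t ht) (hx0 t ht)
    (uniqueDiffOn_Icc hτtf t ht) x (f (t, x))).trans_lt ?_
  have hnear : ‖x - x0 t‖ ≤ √(1 / lam) := by
    have he : 1 ≤ Real.exp (c * (tf - t) / (tf - τ)) :=
      Real.one_le_exp (div_nonneg (mul_nonneg hc.le (sub_nonneg.2 ht.2)) (sub_pos.2 hτtf).le)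
    rw [Real.le_sqrt (norm_nonneg _) (by positivity), le_div_iff₀ hlam]
    nlinarith [hcoer t ht (x - x0 t)]
  exact exp_rate_add_lt_zero (sub_pos.2 hτtf) hlam (by positivity) (Real.exp_pos _).le hV
    (hcoer t ht _) (bilinForm_add_quadForm_add_bilinForm_le (hBP t ht) (hBD t ht) (hL t ht x hnear))

/-- Lemma 2 of the paper: given a nominal solution `x0` of `ẋ = f(t,x)` on `[τ, tf]`,
the linearization `A(t) = D_x f(t, x0(t))` along it, and a symmetric positive definite
solution `P0` of the Lyapunov differential equation
`P0' = -(AᵀP0 + P0 A + Q)` with `Q` continuous symmetric positive definite, there is a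
constant `c > 0` such that the exponentially rescaled time-varying quadratic form
`V(t,x) = exp(c (tf - t)/(tf - τ)) (x - x0(t))ᵀ P0(t) (x - x0(t))` satisfies the strict
descent condition `∂V/∂t + ⟨∇ₓV, f⟩ < 0` on its unit level set for every `t ∈ [τ, tf]`. -/
theorem exp_rescaled_lyapunov_certificate
    (n : ℕ) (hn : 1 ≤ n) (τ tf : ℝ) (hτtf : τ < tf)
    (f : ℝ × EuclideanSpace ℝ (Fin n) → EuclideanSpace ℝ (Fin n))
    (hf : ContDiff ℝ 2 f)
    (x0 : ℝ → EuclideanSpace ℝ (Fin n))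
    (hx0 : ∀ t ∈ Icc τ tf, HasDerivWithinAt x0 (f (t, x0 t)) (Icc τ tf) t)
    (A : ℝ → Matrix (Fin n) (Fin n) ℝ)
    (hA : ∀ t ∈ Icc τ tf, ∀ i j, A t i j =
      (fderiv ℝ (fun y => f (t, y)) (x0 t) (EuclideanSpace.single j 1)) i)
    (Q : ℝ → Matrix (Fin n) (Fin n) ℝ)
    (hQcont : ∀ i j, ContinuousOn (fun t => Q t i j) (Icc τ tf))
    (hQpos : ∀ t ∈ Icc τ tf, (Q t).PosDef)
    (P0 : ℝ → Matrix (Fin n) (Fin n) ℝ)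
    (hP0pos : ∀ t ∈ Icc τ tf, (P0 t).PosDef)
    (hP0' : ∀ t ∈ Icc τ tf, ∀ i j,
      HasDerivWithinAt (fun s => P0 s i j)
        ((-((A t)ᵀ * P0 t + P0 t * A t + Q t)) i j) (Icc τ tf) t) :
    ∃ c > (0 : ℝ), ∀ t ∈ Icc τ tf, ∀ x : EuclideanSpace ℝ (Fin n),
      Real.exp (c * (tf - t) / (tf - τ)) * quadForm (P0 t) (x - x0 t) = 1 →
      derivWithin
          (fun s => Real.exp (c * (tf - s) / (tf - τ)) * quadForm (P0 s) (x - x0 s))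
          (Icc τ tf) t
        + fderiv ℝ
            (fun y => Real.exp (c * (tf - t) / (tf - τ)) * quadForm (P0 t) (y - x0 t))
            x (f (t, x)) < 0 :=
  exp_rescaled_lyapunov_certificate_general n τ tf hτtf f hf x0 hx0 A hA Q hQcont P0 hP0pos hP0'
end

section
/- Let n ≥ 1 and let a ≤ b be reals. Let V : ℝ × ℝⁿ → ℝ and f : ℝ × ℝⁿ → ℝⁿ be continuously differentiable, and define g : ℝ × ℝⁿ → ℝ by g(t,x) = ∂V/∂t(t,x) + ⟨∇ₓV(t,x), f(t,x)⟩. Assume that for all t ∈ [a,b] and all x ∈ ℝⁿ with V(t,x) = 1 one has ∇ₓV(t,x) ≠ 0. Suppose there exist δ > 0, t ∈ [a,b], and x ∈ ℝⁿ with V(t,x) = 1 and g(t,x) > δ. Then there exists an open interval I containing t such that for every τ ∈ I there exists y ∈ ℝⁿ with V(τ,y) = 1 and g(τ,y) > 0. -/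
/-!
The orbital derivative `g` is continuous, so `g > 0` on a product neighbourhood `(t - r, t + r) × B(x, r)`.
Since `∇ₓV(t, x) ≠ 0`, Fermat's theorem shows that `x` is neither a local minimum nor a local maximum of
`V(t, ·)`, so the ball `B(x, r)` contains points where `V(t, ·)` is below and above `1`. By continuity
this persists for `τ` near `t`, and the intermediate value theorem on the connected ball gives a point
`y ∈ B(x, r)` with `V(τ, y) = 1`, where `g(τ, y) > 0`.
-/

open Set Filter Topology Metric

theorem DifferentiableAt.deriv_left_add_fderiv_right
    {𝕜 E G : Type*} [NontriviallyNormedField 𝕜] [NormedAddCommGroup E] [NormedSpace 𝕜 E]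
    [NormedAddCommGroup G] [NormedSpace 𝕜 G] {V : 𝕜 × E → G} {p : 𝕜 × E}
    (hV : DifferentiableAt 𝕜 V p) (w : E) :
    deriv (fun s => V (s, p.2)) p.1 + fderiv 𝕜 (fun y => V (p.1, y)) p.2 w = fderiv 𝕜 V p (1, w) := by
  have hleft : HasDerivAt (fun s => V (s, p.2)) (fderiv 𝕜 V p (1, 0)) p.1 :=
    hV.hasFDerivAt.comp_hasDerivAt p.1 (hasFDerivAt_prodMk_left p.1 p.2).hasDerivAt
  have hright : HasFDerivAt (fun y => V (p.1, y)) ((fderiv 𝕜 V p).comp (.inr 𝕜 𝕜 E)) p.2 :=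
    hV.hasFDerivAt.comp p.2 (hasFDerivAt_prodMk_right p.1 p.2)
  rw [hleft.deriv, hright.fderiv, ContinuousLinearMap.comp_apply, ← map_add]
  simp

theorem ContDiff.continuous_deriv_add_fderiv_apply
    {𝕜 E G : Type*} [NontriviallyNormedField 𝕜] [NormedAddCommGroup E] [NormedSpace 𝕜 E]
    [NormedAddCommGroup G] [NormedSpace 𝕜 G] {V : 𝕜 × E → G} {f : 𝕜 × E → E}
    (hV : ContDiff 𝕜 1 V) (hf : Continuous f) :
    Continuous fun p : 𝕜 × E =>
      deriv (fun s => V (s, p.2)) p.1 + fderiv 𝕜 (fun y => V (p.1, y)) p.2 (f p) := by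
  simp_rw [(hV.differentiable one_ne_zero _).deriv_left_add_fderiv_right]
  exact (hV.continuous_fderiv one_ne_zero).clm_apply (continuous_const.prodMk hf)

section LevelSet

variable {E : Type*} [NormedAddCommGroup E] [NormedSpace ℝ E]

theorem exists_mem_ball_lt_of_fderiv_ne_zero {φ : E → ℝ} {x : E} (hφ : fderiv ℝ φ x ≠ 0)
    {r : ℝ} (hr : 0 < r) : ∃ y ∈ ball x r, φ y < φ x := by
  by_contra! h
  exact hφ (IsLocalMin.fderiv_eq_zero (Filter.mem_of_superset (ball_mem_nhds x hr) h))

theorem exists_mem_ball_gt_of_fderiv_ne_zero {φ : E → ℝ} {x : E} (hφ : fderiv ℝ φ x ≠ 0)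
    {r : ℝ} (hr : 0 < r) : ∃ y ∈ ball x r, φ x < φ y := by
  by_contra! h
  exact hφ (IsLocalMax.fderiv_eq_zero (Filter.mem_of_superset (ball_mem_nhds x hr) h))

theorem eventually_exists_mem_ball_eq_of_fderiv_ne_zero {T : Type*} [TopologicalSpace T]
    {V : T × E → ℝ} (hV : Continuous V) {t : T} {x : E}
    (hgrad : fderiv ℝ (fun y => V (t, y)) x ≠ 0) {r : ℝ} (hr : 0 < r) :
    ∀ᶠ τ in 𝓝 t, ∃ y ∈ ball x r, V (τ, y) = V (t, x) := by
  obtain ⟨y₁, hy₁, hlt⟩ := exists_mem_ball_lt_of_fderiv_ne_zero hgrad hr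
  obtain ⟨y₂, hy₂, hgt⟩ := exists_mem_ball_gt_of_fderiv_ne_zero hgrad hr
  have hcont (y : E) : Continuous fun τ => V (τ, y) := hV.comp (.prodMk_left y)
  filter_upwards [(hcont y₁).continuousAt.eventually_lt continuousAt_const hlt,
    continuousAt_const.eventually_lt (hcont y₂).continuousAt hgt] with τ h₁ h₂
  exact (convex_ball x r).isPreconnected.intermediate_value hy₁ hy₂
    (hV.comp (.prodMk_right τ)).continuousOn ⟨h₁.le, h₂.le⟩

end LevelSet

theorem descent_violation_persists_general
    (n : ℕ) (a b : ℝ)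
    (V : ℝ × EuclideanSpace ℝ (Fin n) → ℝ) (hV : ContDiff ℝ 1 V)
    (f : ℝ × EuclideanSpace ℝ (Fin n) → EuclideanSpace ℝ (Fin n)) (hf : ContDiff ℝ 1 f)
    (g : ℝ × EuclideanSpace ℝ (Fin n) → ℝ)
    (hg : ∀ p : ℝ × EuclideanSpace ℝ (Fin n),
      g p = deriv (fun s => V (s, p.2)) p.1
        + fderiv ℝ (fun y => V (p.1, y)) p.2 (f p))
    (hgrad : ∀ t ∈ Icc a b, ∀ x : EuclideanSpace ℝ (Fin n), V (t, x) = 1 →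
      fderiv ℝ (fun y => V (t, y)) x ≠ 0)
    (δ : ℝ) (hδ : 0 < δ) (t : ℝ) (ht : t ∈ Icc a b)
    (x : EuclideanSpace ℝ (Fin n)) (hVx : V (t, x) = 1) (hgx : g (t, x) > δ) :
    ∃ l u : ℝ, l < t ∧ t < u ∧ ∀ τ ∈ Ioo l u,
      ∃ y : EuclideanSpace ℝ (Fin n), V (τ, y) = 1 ∧ g (τ, y) > 0 := by
  have hg_cont : Continuous g := by
    simpa only [← funext hg] using hV.continuous_deriv_add_fderiv_apply hf.continuous
  obtain ⟨r, hr, hg_pos⟩ : ∃ r > 0, ball (t, x) r ⊆ {p | 0 < g p} :=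
    isOpen_iff.mp (isOpen_lt continuous_const hg_cont) (t, x) (hδ.trans hgx)
  have hτ : ∀ᶠ τ in 𝓝 t, ∃ y ∈ ball x r, V (τ, y) = 1 := by
    simpa only [hVx] using
      eventually_exists_mem_ball_eq_of_fderiv_ne_zero hV.continuous (hgrad t ht x hVx) hr
  have hτ' : ∀ᶠ τ in 𝓝 t, ∃ y, V (τ, y) = 1 ∧ g (τ, y) > 0 := by
    filter_upwards [hτ, ball_mem_nhds t hr] with τ ⟨y, hy, hVy⟩ hτt
    exact ⟨y, hVy, hg_pos (ball_prod_same t x r ▸ mk_mem_prod hτt hy)⟩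
  obtain ⟨l, u, ⟨hl, hu⟩, hsub⟩ := mem_nhds_iff_exists_Ioo_subset.mp hτ'
  exact ⟨l, u, hl, hu, hsub⟩

/-- Lemma 3 of the paper (the sampling lemma): let `g(t,x) = ∂V/∂t + ⟨∇ₓV, f⟩` be the
derivative of `V` along the flow of `ẋ = f(t,x)`, and suppose the spatial gradient of
`V` does not vanish on the level set `{V = 1}` for `t ∈ [a,b]`. If at some `t ∈ [a,b]`
there is a point `x` on the level set with `g(t,x) > δ > 0`, then there is an open
interval around `t` such that at every time `τ` in it there is a point `y` on the level
set `{V(τ,·) = 1}` with `g(τ,y) > 0`. -/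
theorem descent_violation_persists
    (n : ℕ) (hn : 1 ≤ n) (a b : ℝ) (hab : a ≤ b)
    (V : ℝ × EuclideanSpace ℝ (Fin n) → ℝ) (hV : ContDiff ℝ 1 V)
    (f : ℝ × EuclideanSpace ℝ (Fin n) → EuclideanSpace ℝ (Fin n)) (hf : ContDiff ℝ 1 f)
    (g : ℝ × EuclideanSpace ℝ (Fin n) → ℝ)
    (hg : ∀ p : ℝ × EuclideanSpace ℝ (Fin n),
      g p = deriv (fun s => V (s, p.2)) p.1
        + fderiv ℝ (fun y => V (p.1, y)) p.2 (f p))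
    (hgrad : ∀ t ∈ Icc a b, ∀ x : EuclideanSpace ℝ (Fin n), V (t, x) = 1 →
      fderiv ℝ (fun y => V (t, y)) x ≠ 0)
    (δ : ℝ) (hδ : 0 < δ) (t : ℝ) (ht : t ∈ Icc a b)
    (x : EuclideanSpace ℝ (Fin n)) (hVx : V (t, x) = 1) (hgx : g (t, x) > δ) :
    ∃ l u : ℝ, l < t ∧ t < u ∧ ∀ τ ∈ Ioo l u,
      ∃ y : EuclideanSpace ℝ (Fin n), V (τ, y) = 1 ∧ g (τ, y) > 0 :=
  descent_violation_persists_general n a b V hV f hf g hg hgrad δ hδ t ht x hVx hgx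
end

section
/- Let n ≥ 1 and let a ≤ b be reals. Let V : ℝ × ℝⁿ → ℝ and f : ℝ × ℝⁿ → ℝⁿ be continuously differentiable, and define g : ℝ × ℝⁿ → ℝ by g(t,x) = ∂V/∂t(t,x) + ⟨∇ₓV(t,x), f(t,x)⟩. Assume that for all t ∈ [a,b] and all x ∈ ℝⁿ with V(t,x) = 1 one has ∇ₓV(t,x) ≠ 0. Suppose there exist δ > 0, t* ∈ [a,b], and x* ∈ ℝⁿ with V(t*,x*) = 1 and g(t*,x*) > δ. Then there exists h > 0 such that for every finite set S ⊆ [a,b] with the property that every point of [a,b] lies within distance h of some element of S, there exist τ ∈ S and y ∈ ℝⁿ with V(τ,y) = 1 and g(τ,y) > 0. -/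
/-!
The drift `g (t, x)` equals `DV (t, x) (1, f (t, x))`, so it is continuous and hence positive near
`(t*, x*)`. Since `∇ₓV (t*, x*) ≠ 0`, the map `V (t*, ·)` crosses the level `1` strictly along a
line through `x*`; by continuity in `t` the crossing persists for all `t` near `t*`, and the
intermediate value theorem then gives points `y` near `x*` with `V (t, y) = 1` and `g (t, y) > 0`.
A sample set of small enough mesh contains such a `t`.
-/

open Set Filter Topology

theorem DifferentiableAt.deriv_slice_add_fderiv_slice {𝕜 E F : Type*} [NontriviallyNormedField 𝕜]
    [NormedAddCommGroup E] [NormedSpace 𝕜 E] [NormedAddCommGroup F] [NormedSpace 𝕜 F]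
    {V : 𝕜 × E → F} {p : 𝕜 × E} (hV : DifferentiableAt 𝕜 V p) (w : E) :
    deriv (fun s => V (s, p.2)) p.1 + fderiv 𝕜 (fun y => V (p.1, y)) p.2 w
      = fderiv 𝕜 V p (1, w) := by
  have hfst : HasFDerivAt (fun s => V (s, p.2))
      ((fderiv 𝕜 V p).comp (ContinuousLinearMap.inl 𝕜 𝕜 E)) p.1 :=
    hV.hasFDerivAt.comp p.1 (hasFDerivAt_prodMk_left p.1 p.2)
  have hsnd : HasFDerivAt (fun y => V (p.1, y))
      ((fderiv 𝕜 V p).comp (ContinuousLinearMap.inr 𝕜 𝕜 E)) p.2 :=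
    hV.hasFDerivAt.comp p.2 (hasFDerivAt_prodMk_right p.1 p.2)
  rw [hfst.hasDerivAt.deriv, hsnd.fderiv]
  simp [← map_add]

theorem exists_lt_lt_of_hasDerivAt_pos {φ : ℝ → ℝ} {d : ℝ} (hφ : HasDerivAt φ d 0) (hd : 0 < d)
    {B : Set ℝ} (hB : B ∈ 𝓝 0) :
    ∃ ε > 0, Icc (-ε) ε ⊆ B ∧ φ (-ε) < φ 0 ∧ φ 0 < φ ε := by
  have hsign : ∀ᶠ s in 𝓝 0, SignType.sign (φ s - φ 0) = SignType.sign s := by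
    simpa using eventually_nhdsWithin_sign_eq_of_deriv_pos (f := fun s => φ s - φ 0)
      (by simpa [hφ.deriv] using hd) (sub_self _)
  obtain ⟨ε, hε, hball⟩ := Metric.nhds_basis_closedBall.eventually_iff.mp (hsign.and hB)
  rw [Real.closedBall_eq_Icc, zero_sub, zero_add] at hball
  have hleft := (hball ⟨le_rfl, by linarith⟩).1
  have hright := (hball ⟨by linarith, le_rfl⟩).1
  rw [sign_neg (neg_neg_of_pos hε), sign_eq_neg_one_iff, sub_neg] at hleft
  rw [sign_pos hε, sign_eq_one_iff, sub_pos] at hright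
  exact ⟨ε, hε, fun s hs => (hball hs).2, hleft, hright⟩

theorem eventually_exists_mem_and_eq_of_hasDerivAt_pos {X : Type*} [TopologicalSpace X]
    {F : X × ℝ → ℝ} (hF : Continuous F) {x₀ : X} {d : ℝ} (hd : 0 < d)
    (hderiv : HasDerivAt (fun s => F (x₀, s)) d 0) {U : Set (X × ℝ)} (hU : U ∈ 𝓝 (x₀, 0)) :
    ∀ᶠ x in 𝓝 x₀, ∃ s, (x, s) ∈ U ∧ F (x, s) = F (x₀, 0) := by
  obtain ⟨A, hA, B, hB, hAB⟩ := mem_nhds_prod_iff.mp hU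
  obtain ⟨ε, hε, hεB, hneg, hpos⟩ := exists_lt_lt_of_hasDerivAt_pos hderiv hd hB
  have hslice : ∀ s, Continuous fun x => F (x, s) := fun s => by fun_prop
  filter_upwards [hA, (hslice (-ε)).continuousAt.eventually (gt_mem_nhds hneg),
    (hslice ε).continuousAt.eventually (lt_mem_nhds hpos)] with x hxA hx_neg hx_pos
  obtain ⟨s, hs, hFs⟩ := intermediate_value_Icc (by linarith)
    (show Continuous fun s => F (x, s) by fun_prop).continuousOn ⟨hx_neg.le, hx_pos.le⟩
  exact ⟨s, hAB ⟨hxA, hεB hs⟩, hFs⟩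

theorem eventually_exists_mem_and_eq_of_hasFDerivAt_slice {T E : Type*} [TopologicalSpace T]
    [NormedAddCommGroup E] [NormedSpace ℝ E] {V : T × E → ℝ} (hV : Continuous V)
    {t₀ : T} {x₀ : E} {D : E →L[ℝ] ℝ} (hD : HasFDerivAt (fun y => V (t₀, y)) D x₀) (hD0 : D ≠ 0)
    {U : Set (T × E)} (hU : U ∈ 𝓝 (t₀, x₀)) :
    ∀ᶠ t in 𝓝 t₀, ∃ y, (t, y) ∈ U ∧ V (t, y) = V (t₀, x₀) := by
  obtain ⟨u, hu⟩ : ∃ u, D u ≠ 0 := by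
    by_contra! h
    exact hD0 (ContinuousLinearMap.ext h)
  set v := (D u)⁻¹ • u
  have hDv : D v = 1 := by simp [v, hu]
  let line : T × ℝ → T × E := fun p => (p.1, x₀ + p.2 • v)
  have hline : Continuous line := by fun_prop
  have hderiv : HasDerivAt (fun s => V (line (t₀, s))) 1 0 := by
    have hcurve : HasDerivAt (fun s : ℝ => x₀ + s • v) v 0 :=
      ((hasDerivAt_id 0).smul_const v).const_add x₀ |>.congr_deriv (one_smul ℝ v)
    have hD' : HasFDerivAt (fun y => V (t₀, y)) D (x₀ + (0 : ℝ) • v) := by simpa using hD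
    rw [← hDv]
    exact hD'.comp_hasDerivAt 0 hcurve
  filter_upwards [eventually_exists_mem_and_eq_of_hasDerivAt_pos (hV.comp hline) one_pos hderiv
    (hline.continuousAt.preimage_mem_nhds (by simpa [line] using hU))] with t ⟨s, hsU, hVs⟩
  exact ⟨x₀ + s • v, hsU, by simpa [line] using hVs⟩

theorem fine_sampling_detects_violation_general
    (n : ℕ) (a b : ℝ)
    (V : ℝ × EuclideanSpace ℝ (Fin n) → ℝ) (hV : ContDiff ℝ 1 V)
    (f : ℝ × EuclideanSpace ℝ (Fin n) → EuclideanSpace ℝ (Fin n)) (hf : ContDiff ℝ 1 f)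
    (g : ℝ × EuclideanSpace ℝ (Fin n) → ℝ)
    (hg : ∀ p : ℝ × EuclideanSpace ℝ (Fin n),
      g p = deriv (fun s => V (s, p.2)) p.1
        + fderiv ℝ (fun y => V (p.1, y)) p.2 (f p))
    (hgrad : ∀ t ∈ Icc a b, ∀ x : EuclideanSpace ℝ (Fin n), V (t, x) = 1 →
      fderiv ℝ (fun y => V (t, y)) x ≠ 0)
    (δ : ℝ) (hδ : 0 < δ) (tstar : ℝ) (htstar : tstar ∈ Icc a b)
    (xstar : EuclideanSpace ℝ (Fin n)) (hVx : V (tstar, xstar) = 1)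
    (hgx : g (tstar, xstar) > δ) :
    ∃ h > (0 : ℝ), ∀ S : Finset ℝ, (∀ s ∈ S, s ∈ Icc a b) →
      (∀ t ∈ Icc a b, ∃ s ∈ S, |t - s| ≤ h) →
      ∃ τ ∈ S, ∃ y : EuclideanSpace ℝ (Fin n), V (τ, y) = 1 ∧ g (τ, y) > 0 := by
  have hVd : Differentiable ℝ V := hV.differentiable one_ne_zero
  have hg_eq : g = fun p => fderiv ℝ V p (1, f p) :=
    funext fun p => (hg p).trans ((hVd p).deriv_slice_add_fderiv_slice (f p))
  have hg_cont : Continuous g := by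
    rw [hg_eq]
    exact (hV.continuous_fderiv one_ne_zero).clm_apply (continuous_const.prodMk hf.continuous)
  have hslice : HasFDerivAt (fun y => V (tstar, y))
      (fderiv ℝ (fun y => V (tstar, y)) xstar) xstar :=
    (show DifferentiableAt ℝ (fun y => V (tstar, y)) xstar by fun_prop).hasFDerivAt
  have hlevel : ∀ᶠ t in 𝓝 tstar, ∃ y, 0 < g (t, y) ∧ V (t, y) = 1 := by
    simpa [hVx] using eventually_exists_mem_and_eq_of_hasFDerivAt_slice hV.continuous hslice
      (hgrad tstar htstar xstar hVx) (hg_cont.continuousAt.preimage_mem_nhds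
        (lt_mem_nhds (hδ.trans hgx)))
  obtain ⟨h, hh, hball⟩ := Metric.nhds_basis_closedBall.eventually_iff.mp hlevel
  refine ⟨h, hh, fun S _ hmesh => ?_⟩
  obtain ⟨τ, hτS, hτ⟩ := hmesh tstar htstar
  obtain ⟨y, hgy, hVy⟩ := hball (by rwa [Metric.mem_closedBall, Real.dist_eq, abs_sub_comm])
  exact ⟨τ, hτS, y, hVy, hgy⟩

/-- Consequence of Lemma 3 of the paper: if a candidate Lyapunov function `V` violates,
by a fixed margin `δ > 0`, the descent condition on the level set `{V = 1}` somewhere on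
`[a,b]`, then there is a mesh size `h > 0` such that every finite sample set
`S ⊆ [a,b]` of mesh at most `h` contains a sample time `τ` at which the sampled
feasibility conditions fail, i.e. there is `y` with `V(τ,y) = 1` and `g(τ,y) > 0`,
where `g(t,x) = ∂V/∂t + ⟨∇ₓV, f⟩`. -/
theorem fine_sampling_detects_violation
    (n : ℕ) (hn : 1 ≤ n) (a b : ℝ) (hab : a ≤ b)
    (V : ℝ × EuclideanSpace ℝ (Fin n) → ℝ) (hV : ContDiff ℝ 1 V)
    (f : ℝ × EuclideanSpace ℝ (Fin n) → EuclideanSpace ℝ (Fin n)) (hf : ContDiff ℝ 1 f)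
    (g : ℝ × EuclideanSpace ℝ (Fin n) → ℝ)
    (hg : ∀ p : ℝ × EuclideanSpace ℝ (Fin n),
      g p = deriv (fun s => V (s, p.2)) p.1
        + fderiv ℝ (fun y => V (p.1, y)) p.2 (f p))
    (hgrad : ∀ t ∈ Icc a b, ∀ x : EuclideanSpace ℝ (Fin n), V (t, x) = 1 →
      fderiv ℝ (fun y => V (t, y)) x ≠ 0)
    (δ : ℝ) (hδ : 0 < δ) (tstar : ℝ) (htstar : tstar ∈ Icc a b)
    (xstar : EuclideanSpace ℝ (Fin n)) (hVx : V (tstar, xstar) = 1)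
    (hgx : g (tstar, xstar) > δ) :
    ∃ h > (0 : ℝ), ∀ S : Finset ℝ, (∀ s ∈ S, s ∈ Icc a b) →
      (∀ t ∈ Icc a b, ∃ s ∈ S, |t - s| ≤ h) →
      ∃ τ ∈ S, ∃ y : EuclideanSpace ℝ (Fin n), V (τ, y) = 1 ∧ g (τ, y) > 0 :=
  fine_sampling_detects_violation_general n a b V hV f hf g hg hgrad δ hδ tstar htstar xstar hVx hgx
end

section
/- Let n ≥ 1 and let a < b be reals. Let f : ℝ × ℝⁿ → ℝⁿ be any function, let V̄ : ℝ × ℝⁿ → ℝ be continuously differentiable, let ρ : ℝ → ℝ be differentiable with ρ(t) > 0 for all t ∈ [a,b], let μ : ℝ × ℝⁿ → ℝ be any function, let ℓ : ℝ × ℝⁿ → ℝ satisfy ℓ(t,x) ≥ 0 for all (t,x), and let ε ∈ ℝ. Assume that for all (t,x) ∈ ℝ × ℝⁿ: ∂V̄/∂t(t,x) + ⟨∇ₓV̄(t,x), f(t,x)⟩ − ρ′(t) + μ(t,x)(ρ(t) − V̄(t,x)) + ℓ(t,x)(t−a)(b−t) ≤ ε. Define V(t,x) = V̄(t,x)/ρ(t).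 Then for every t ∈ [a,b] and every x ∈ ℝⁿ with V̄(t,x) = ρ(t) (equivalently V(t,x) = 1), one has ∂V/∂t(t,x) + ⟨∇ₓV(t,x), f(t,x)⟩ ≤ ε/ρ(t). -/
open Set

section LyapunovDeriv

variable {E : Type*} [NormedAddCommGroup E] [NormedSpace ℝ E]

noncomputable def lyapunovDeriv (V : ℝ × E → ℝ) (f : ℝ × E → E) (t : ℝ) (x : E) : ℝ :=
  deriv (fun s => V (s, x)) t + fderiv ℝ (fun y => V (t, y)) x (f (t, x))

theorem fderiv_div_const_apply {𝕜 F : Type*} [NontriviallyNormedField 𝕜]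
    [NormedAddCommGroup F] [NormedSpace 𝕜 F] (g : F → 𝕜) (c : 𝕜) (x v : F) :
    fderiv 𝕜 (fun y => g y / c) x v = fderiv 𝕜 g x v / c := by
  have hg : (fun y => g y / c) = c⁻¹ • g := by
    funext y
    simp only [Pi.smul_apply, smul_eq_mul, div_eq_inv_mul]
  rw [hg, fderiv_const_smul_field, Pi.smul_apply, smul_apply, smul_eq_mul,
    div_eq_inv_mul]

theorem deriv_div_of_apply_eq {𝕜 : Type*} [NontriviallyNormedField 𝕜] {g ρ : 𝕜 → 𝕜} {t : 𝕜}
    (hg : DifferentiableAt 𝕜 g t) (hρ : DifferentiableAt 𝕜 ρ t) (hρt : ρ t ≠ 0)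
    (hgρ : g t = ρ t) :
    deriv (fun s => g s / ρ s) t = (deriv g t - deriv ρ t) / ρ t := by
  rw [deriv_fun_div hg hρ hρt, hgρ]
  field_simp

theorem lyapunovDeriv_div_of_apply_eq (f : ℝ × E → E) {V : ℝ × E → ℝ} {ρ : ℝ → ℝ}
    {t : ℝ} {x : E} (hV : DifferentiableAt ℝ (fun s => V (s, x)) t)
    (hρ : DifferentiableAt ℝ ρ t) (hρt : ρ t ≠ 0) (hVρ : V (t, x) = ρ t) :
    lyapunovDeriv (fun p => V p / ρ p.1) f t x
      = (lyapunovDeriv V f t x - deriv ρ t) / ρ t := by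
  simp only [lyapunovDeriv]
  rw [deriv_div_of_apply_eq hV hρ hρt hVρ, fderiv_div_const_apply]
  ring

end LyapunovDeriv

theorem s_procedure_soundness_general
    (n : ℕ) (a b : ℝ)
    (f : ℝ × EuclideanSpace ℝ (Fin n) → EuclideanSpace ℝ (Fin n))
    (Vbar : ℝ × EuclideanSpace ℝ (Fin n) → ℝ) (hVbar : ContDiff ℝ 1 Vbar)
    (ρ : ℝ → ℝ) (hρ : Differentiable ℝ ρ) (hρpos : ∀ t ∈ Icc a b, 0 < ρ t)
    (μ : ℝ × EuclideanSpace ℝ (Fin n) → ℝ)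
    (ℓ : ℝ × EuclideanSpace ℝ (Fin n) → ℝ)
    (hℓ : ∀ p : ℝ × EuclideanSpace ℝ (Fin n), 0 ≤ ℓ p)
    (ε : ℝ)
    (hcon : ∀ t : ℝ, ∀ x : EuclideanSpace ℝ (Fin n),
      deriv (fun s => Vbar (s, x)) t
        + fderiv ℝ (fun y => Vbar (t, y)) x (f (t, x))
        - deriv ρ t + μ (t, x) * (ρ t - Vbar (t, x))
        + ℓ (t, x) * (t - a) * (b - t) ≤ ε) :
    ∀ t ∈ Icc a b, ∀ x : EuclideanSpace ℝ (Fin n), Vbar (t, x) = ρ t →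
      deriv (fun s => Vbar (s, x) / ρ s) t
        + fderiv ℝ (fun y => Vbar (t, y) / ρ t) x (f (t, x)) ≤ ε / ρ t := by
  intro t ⟨hat, htb⟩ x hlev
  have hρt : 0 < ρ t := hρpos t ⟨hat, htb⟩
  have hV : DifferentiableAt ℝ (fun s => Vbar (s, x)) t :=
    ((hVbar.differentiable one_ne_zero) (t, x)).comp t
      (differentiableAt_id.prodMk (differentiableAt_const x))
  -- On the level set the `μ`-term vanishes, and on `[a, b]` the `ℓ`-term is nonnegative.
  have hdecay : lyapunovDeriv Vbar f t x - deriv ρ t ≤ ε := by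
    have hcon_t := hcon t x
    rw [hlev, sub_self, mul_zero, add_zero] at hcon_t
    have hℓ_t : 0 ≤ ℓ (t, x) * (t - a) * (b - t) :=
      mul_nonneg (mul_nonneg (hℓ _) (sub_nonneg.mpr hat)) (sub_nonneg.mpr htb)
    rw [lyapunovDeriv]
    linarith
  calc _ = lyapunovDeriv (fun p => Vbar p / ρ p.1) f t x := rfl
    _ = (lyapunovDeriv Vbar f t x - deriv ρ t) / ρ t :=
        lyapunovDeriv_div_of_apply_eq f hV (hρ t) hρt.ne' hlev
    _ ≤ ε / ρ t := div_le_div_of_nonneg_right hdecay hρt.le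

/-- Soundness of the S-procedure constraint of Section 3 of the paper: if on all of
`ℝ × ℝⁿ` the constraint
`∂V̄/∂t + ⟨∇ₓV̄, f⟩ − ρ' + μ·(ρ − V̄) + ℓ·(t−a)(b−t) ≤ ε`
holds with `ℓ ≥ 0`, then for every `t ∈ [a,b]` and `x` on the level set `V̄(t,x) = ρ(t)`
(i.e. `V(t,x) = 1` for `V = V̄/ρ`), the Lyapunov derivative of the rescaled function
`V = V̄/ρ` is at most `ε/ρ(t)`. -/
theorem s_procedure_soundness
    (n : ℕ) (hn : 1 ≤ n) (a b : ℝ) (hab : a < b)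
    (f : ℝ × EuclideanSpace ℝ (Fin n) → EuclideanSpace ℝ (Fin n))
    (Vbar : ℝ × EuclideanSpace ℝ (Fin n) → ℝ) (hVbar : ContDiff ℝ 1 Vbar)
    (ρ : ℝ → ℝ) (hρ : Differentiable ℝ ρ) (hρpos : ∀ t ∈ Icc a b, 0 < ρ t)
    (μ : ℝ × EuclideanSpace ℝ (Fin n) → ℝ)
    (ℓ : ℝ × EuclideanSpace ℝ (Fin n) → ℝ)
    (hℓ : ∀ p : ℝ × EuclideanSpace ℝ (Fin n), 0 ≤ ℓ p)
    (ε : ℝ)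
    (hcon : ∀ t : ℝ, ∀ x : EuclideanSpace ℝ (Fin n),
      deriv (fun s => Vbar (s, x)) t
        + fderiv ℝ (fun y => Vbar (t, y)) x (f (t, x))
        - deriv ρ t + μ (t, x) * (ρ t - Vbar (t, x))
        + ℓ (t, x) * (t - a) * (b - t) ≤ ε) :
    ∀ t ∈ Icc a b, ∀ x : EuclideanSpace ℝ (Fin n), Vbar (t, x) = ρ t →
      deriv (fun s => Vbar (s, x) / ρ s) t
        + fderiv ℝ (fun y => Vbar (t, y) / ρ t) x (f (t, x)) ≤ ε / ρ t :=
  s_procedure_soundness_general n a b f Vbar hVbar ρ hρ hρpos μ ℓ hℓ ε hcon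
end
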